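/- Identify the tangent plane with span{e₁,e₂} in ℝ³ and n₀ = e₃. For a matrix X ∈ ℝ³ˣ³ whose columns 3 are zero (i.e. X = Σ_{i,α} X_{iα} eᵢ⊗e_α with α ∈ {1,2}), define the linear operator L(X) := X − (λ/(λ+2μ))(tr X)·n₀⊗n₀ − ((μ−μ_c)/(μ+μ_c))·(Xᵀn₀)⊗n₀ and the tensor map C(E) := 2μ·sym E + 2μ_c·skew E + λ(tr E)·I. Then ⟨X, C(L(X))⟩ = 2W_mp(X) − (λ²/(λ+2μ))(tr X)² − ((μ−μ_c)²/(μ+μ_c))‖Xᵀn₀‖², where W_mp(X) = μ‖sym X‖² + μ_c‖skew X‖² + (λ/2)(tr X)² and ⟨·,·⟩ is the Frobenius inner product. -/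

import Mathlib

open Matrix

noncomputable def finner (A B : Matrix (Fin 3) (Fin 3) ℝ) : ℝ := (A.transpose * B).trace

noncomputable def symM (X : Matrix (Fin 3) (Fin 3) ℝ) : Matrix (Fin 3) (Fin 3) ℝ :=
  ((1:ℝ)/2) • (X + X.transpose)

noncomputable def skewM (X : Matrix (Fin 3) (Fin 3) ℝ) : Matrix (Fin 3) (Fin 3) ℝ :=
  ((1:ℝ)/2) • (X - X.transpose)

/-- the normal vector n₀ = e₃ -/
noncomputable def n0 : Fin 3 → ℝ := fun i => if i = 2 then 1 else 0

/-- the operator `L_{n₀}` -/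
noncomputable def Lop (μ μc lam : ℝ) (X : Matrix (Fin 3) (Fin 3) ℝ) :
    Matrix (Fin 3) (Fin 3) ℝ :=
  X - (lam / (lam + 2 * μ)) • (X.trace • vecMulVec n0 n0)
    - ((μ - μc) / (μ + μc)) • vecMulVec (X.transpose *ᵥ n0) n0

/-- the constitutive map `C` -/
noncomputable def Cmap (μ μc lam : ℝ) (E : Matrix (Fin 3) (Fin 3) ℝ) :
    Matrix (Fin 3) (Fin 3) ℝ :=
  (2 * μ) • symM E + (2 * μc) • skewM E + (lam * E.trace) • (1 : Matrix (Fin 3) (Fin 3) ℝ)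

/-!
`C` and `⟨X, ·⟩` are linear, so `⟨X, C(L X)⟩` splits into `⟨X, C X⟩ = 2 W_mp(X)` and the
contributions of the two rank-one corrections in `L`. On dyads,
`C(u ⊗ w) = (μ + μ_c) u ⊗ w + (μ - μ_c) w ⊗ u + λ (u ⬝ w) I` and `⟨X, u ⊗ w⟩ = u ⬝ X w`;
since `X n₀ = 0` (hence also `Xᵀn₀ ⬝ n₀ = 0`) this gives `⟨X, C(n₀ ⊗ n₀)⟩ = λ tr X` and
`⟨X, C(Xᵀn₀ ⊗ n₀)⟩ = (μ - μ_c) ‖Xᵀn₀‖²`.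
-/

lemma finner_add_right (X A B : Matrix (Fin 3) (Fin 3) ℝ) :
    finner X (A + B) = finner X A + finner X B := by
  rw [finner, Matrix.mul_add, trace_add]; rfl

lemma finner_sub_right (X A B : Matrix (Fin 3) (Fin 3) ℝ) :
    finner X (A - B) = finner X A - finner X B := by
  rw [finner, Matrix.mul_sub, trace_sub]; rfl

lemma finner_smul_right (X A : Matrix (Fin 3) (Fin 3) ℝ) (c : ℝ) :
    finner X (c • A) = c * finner X A := by
  rw [finner, Matrix.mul_smul, trace_smul, smul_eq_mul]; rfl

lemma finner_vecMulVec (X : Matrix (Fin 3) (Fin 3) ℝ) (u w : Fin 3 → ℝ) :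
    finner X (vecMulVec u w) = u ⬝ᵥ X *ᵥ w := by
  rw [finner, mul_vecMulVec, trace_vecMulVec, dotProduct_comm, dotProduct_transpose_mulVec]

lemma finner_one (X : Matrix (Fin 3) (Fin 3) ℝ) : finner X 1 = X.trace := by
  rw [finner, Matrix.mul_one, trace_transpose]

lemma finner_symM_self (X : Matrix (Fin 3) (Fin 3) ℝ) :
    finner X (symM X) = finner (symM X) (symM X) := by
  simp only [finner, symM, transpose_smul, transpose_add, transpose_transpose, Matrix.smul_mul,
    Matrix.mul_smul, Matrix.add_mul, Matrix.mul_add, trace_smul, trace_add, smul_eq_mul]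
  rw [trace_mul_comm X Xᵀ, ← trace_transpose (Xᵀ * Xᵀ), transpose_mul, transpose_transpose]
  ring

lemma finner_skewM_self (X : Matrix (Fin 3) (Fin 3) ℝ) :
    finner X (skewM X) = finner (skewM X) (skewM X) := by
  simp only [finner, skewM, transpose_smul, transpose_sub, transpose_transpose, Matrix.smul_mul,
    Matrix.mul_smul, Matrix.sub_mul, Matrix.mul_sub, trace_smul, trace_sub, smul_eq_mul]
  rw [trace_mul_comm X Xᵀ, ← trace_transpose (Xᵀ * Xᵀ), transpose_mul, transpose_transpose]
  ring

lemma finner_Cmap_self (μ μc lam : ℝ) (X : Matrix (Fin 3) (Fin 3) ℝ) :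
    finner X (Cmap μ μc lam X) = 2 * (μ * finner (symM X) (symM X)
      + μc * finner (skewM X) (skewM X) + (lam / 2) * X.trace ^ 2) := by
  rw [Cmap, finner_add_right, finner_add_right, finner_smul_right, finner_smul_right,
    finner_smul_right, finner_symM_self, finner_skewM_self, finner_one]
  ring

lemma Cmap_sub (μ μc lam : ℝ) (A B : Matrix (Fin 3) (Fin 3) ℝ) :
    Cmap μ μc lam (A - B) = Cmap μ μc lam A - Cmap μ μc lam B := by
  simp only [Cmap, symM, skewM, transpose_sub, trace_sub]
  module

lemma Cmap_smul (μ μc lam c : ℝ) (A : Matrix (Fin 3) (Fin 3) ℝ) :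
    Cmap μ μc lam (c • A) = c • Cmap μ μc lam A := by
  simp only [Cmap, symM, skewM, transpose_smul, trace_smul, smul_eq_mul]
  module

lemma Cmap_vecMulVec (μ μc lam : ℝ) (u w : Fin 3 → ℝ) :
    Cmap μ μc lam (vecMulVec u w) =
      (μ + μc) • vecMulVec u w + (μ - μc) • vecMulVec w u + (lam * (u ⬝ᵥ w)) • 1 := by
  rw [Cmap, symM, skewM, transpose_vecMulVec, trace_vecMulVec]
  module

lemma finner_Cmap_vecMulVec (μ μc lam : ℝ) (X : Matrix (Fin 3) (Fin 3) ℝ) (u w : Fin 3 → ℝ) :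
    finner X (Cmap μ μc lam (vecMulVec u w)) =
      (μ + μc) * (u ⬝ᵥ X *ᵥ w) + (μ - μc) * (w ⬝ᵥ X *ᵥ u) + lam * (u ⬝ᵥ w) * X.trace := by
  rw [Cmap_vecMulVec, finner_add_right, finner_add_right, finner_smul_right, finner_smul_right,
    finner_smul_right, finner_vecMulVec, finner_vecMulVec, finner_one, mul_assoc]

lemma n0_dotProduct_n0 : n0 ⬝ᵥ n0 = 1 := by
  simp [n0, dotProduct]

theorem inner_C_L_general (μ μc lam : ℝ)
    (X : Matrix (Fin 3) (Fin 3) ℝ) (hX : X *ᵥ n0 = 0) :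
    finner X (Cmap μ μc lam (Lop μ μc lam X)) =
      2 * (μ * finner (symM X) (symM X) + μc * finner (skewM X) (skewM X)
            + (lam / 2) * X.trace ^ 2)
        - (lam ^ 2 / (lam + 2 * μ)) * X.trace ^ 2
        - ((μ - μc) ^ 2 / (μ + μc)) * ((X.transpose *ᵥ n0) ⬝ᵥ (X.transpose *ᵥ n0)) := by
  set v := Xᵀ *ᵥ n0
  have hv : v ⬝ᵥ n0 = 0 := by
    rw [dotProduct_comm, dotProduct_transpose_mulVec, hX, dotProduct_zero]
  have normal_part : finner X (Cmap μ μc lam (vecMulVec n0 n0)) = lam * X.trace := by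
    rw [finner_Cmap_vecMulVec, hX, n0_dotProduct_n0, dotProduct_zero]
    ring
  have shear_part : finner X (Cmap μ μc lam (vecMulVec v n0)) = (μ - μc) * (v ⬝ᵥ v) := by
    rw [finner_Cmap_vecMulVec, hX, hv, dotProduct_zero, ← dotProduct_transpose_mulVec]
    ring
  rw [Lop, Cmap_sub, Cmap_sub, Cmap_smul, Cmap_smul, Cmap_smul, finner_sub_right, finner_sub_right,
    finner_smul_right, finner_smul_right, finner_smul_right, finner_Cmap_self, normal_part,
    shear_part]
  ring

/-- `⟨X, C(L(X))⟩ = 2W_mp(X) − (λ²/(λ+2μ))(tr X)² − ((μ−μ_c)²/(μ+μ_c))‖Xᵀn₀‖²`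
for matrices `X` with vanishing third column. -/
theorem inner_C_L (μ μc lam : ℝ) (h1 : lam + 2 * μ ≠ 0) (h2 : μ + μc ≠ 0)
    (X : Matrix (Fin 3) (Fin 3) ℝ) (hX : X *ᵥ n0 = 0) :
    finner X (Cmap μ μc lam (Lop μ μc lam X)) =
      2 * (μ * finner (symM X) (symM X) + μc * finner (skewM X) (skewM X)
            + (lam / 2) * X.trace ^ 2)
        - (lam ^ 2 / (lam + 2 * μ)) * X.trace ^ 2
        - ((μ - μc) ^ 2 / (μ + μc)) * ((X.transpose *ᵥ n0) ⬝ᵥ (X.transpose *ᵥ n0)) :=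
  inner_C_L_general μ μc lam X hX
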